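/- Let S be a Schur module over F[G], let f : F → F be any function with f(0) = 0, and for α = Σ α_g g define f[α] = Σ f(α_g) g. Then f[α] ∈ S for every α ∈ S. -/

import Mathlib

/-- The Hadamard (coefficientwise) product on the group algebra. -/
noncomputable def hadamard {F G : Type*} [Semiring F]
    (α β : MonoidAlgebra F G) : MonoidAlgebra F G :=
  MonoidAlgebra.ofCoeff (Finsupp.zipWith (· * ·) (mul_zero 0) α.coeff β.coeff)

/-- The simple quantity `C̄ = ∑_{g ∈ C} g` of a finite subset of `G`. -/
noncomputable def simpleQuantity (F : Type*) {G : Type*} [Semiring F] (C : Finset G) :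
    MonoidAlgebra F G :=
  ∑ g ∈ C, MonoidAlgebra.ofCoeff (Finsupp.single g 1)

/-- A partition of `G` into finite (nonempty) classes, i.e. a partition of finite support. -/
structure FinPartition (G : Type*) where
  classes : Set (Finset G)
  nonempty : ∀ C ∈ classes, C.Nonempty
  existsUnique_mem : ∀ g : G, ∃! C, C ∈ classes ∧ g ∈ C

/-- The Schur module associated to a partition of finite support: the `F`-span of the
simple quantities of the classes. -/
noncomputable def schurModule (F : Type*) {G : Type*} [Field F] (P : FinPartition G) :
    Submodule F (MonoidAlgebra F G) :=
  Submodule.span F (simpleQuantity F '' P.classes)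

/-!
The Schur module consists exactly of the elements of `F[G]` whose coefficients are constant on
each class of the partition. Simple quantities of classes have this property; conversely, such an
element is the sum, over the finitely many classes meeting its support, of its value on the class
times the simple quantity of the class. Applying `f` coefficientwise preserves constancy on classes.
-/

namespace FinPartition

variable {G : Type*} (P : FinPartition G)

noncomputable def classOf (g : G) : Finset G :=
  (P.existsUnique_mem g).exists.choose

theorem classOf_mem (g : G) : P.classOf g ∈ P.classes :=
  (P.existsUnique_mem g).exists.choose_spec.1

theorem mem_classOf (g : G) : g ∈ P.classOf g :=
  (P.existsUnique_mem g).exists.choose_spec.2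

variable {P}

theorem mem_iff_eq_classOf {C : Finset G} (hC : C ∈ P.classes) {g : G} :
    g ∈ C ↔ C = P.classOf g :=
  ⟨fun hg => (P.existsUnique_mem g).unique ⟨hC, hg⟩ ⟨P.classOf_mem g, P.mem_classOf g⟩,
    fun h => h ▸ P.mem_classOf g⟩

theorem classOf_eq_classOf_iff {g g' : G} : P.classOf g = P.classOf g' ↔ g ∈ P.classOf g' := by
  rw [mem_iff_eq_classOf (P.classOf_mem g'), eq_comm]

variable (P) in
def IsConstOnClasses {β : Type*} (a : G → β) : Prop :=
  ∀ C ∈ P.classes, ∀ g ∈ C, ∀ g' ∈ C, a g = a g'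

theorem IsConstOnClasses.comp {β γ : Type*} {a : G → β} (ha : P.IsConstOnClasses a)
    (f : β → γ) : P.IsConstOnClasses (f ∘ a) :=
  fun C hC g hg g' hg' => congrArg f (ha C hC g hg g' hg')

end FinPartition

open FinPartition

section SchurModule

variable {F G : Type*} [Field F] {P : FinPartition G}

theorem coeff_simpleQuantity [DecidableEq G] (C : Finset G) (g : G) :
    (simpleQuantity F C).coeff g = if g ∈ C then 1 else 0 := by
  simp [simpleQuantity, MonoidAlgebra.coeff_sum, Finsupp.finsetSum_apply, Finsupp.single_apply]

theorem isConstOnClasses_coeff_simpleQuantity {C : Finset G} (hC : C ∈ P.classes) :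
    P.IsConstOnClasses (simpleQuantity F C).coeff := by
  classical
  intro D hD g hg g' hg'
  have hgg' : g ∈ C ↔ g' ∈ C := by
    rw [mem_iff_eq_classOf hC, mem_iff_eq_classOf hC, ← (mem_iff_eq_classOf hD).mp hg,
      ← (mem_iff_eq_classOf hD).mp hg']
  simp only [coeff_simpleQuantity, hgg']

theorem isConstOnClasses_coeff_of_mem_schurModule {α : MonoidAlgebra F G}
    (hα : α ∈ schurModule F P) : P.IsConstOnClasses α.coeff := by
  induction hα using Submodule.span_induction with
  | mem x hx =>
    obtain ⟨C, hC, rfl⟩ := hx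
    exact isConstOnClasses_coeff_simpleQuantity hC
  | zero => exact fun _ _ _ _ _ _ => rfl
  | add x y _ _ hx hy =>
    intro C hC g hg g' hg'
    simp only [MonoidAlgebra.coeff_add, Finsupp.add_apply, hx C hC g hg g' hg', hy C hC g hg g' hg']
  | smul c x _ hx =>
    intro C hC g hg g' hg'
    simp only [MonoidAlgebra.coeff_smul, Finsupp.smul_apply, hx C hC g hg g' hg']

theorem mem_schurModule_of_isConstOnClasses {α : MonoidAlgebra F G}
    (hα : P.IsConstOnClasses α.coeff) : α ∈ schurModule F P := by
  classical
  have hsplit : α = ∑ C ∈ α.coeff.support.image P.classOf,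
      ∑ g ∈ α.coeff.support with P.classOf g = C, MonoidAlgebra.single g (α.coeff g) := by
    rw [Finset.sum_fiberwise_of_maps_to (fun g hg => Finset.mem_image_of_mem _ hg)]
    exact (MonoidAlgebra.sum_coeff_single α).symm
  rw [hsplit]
  refine Submodule.sum_mem _ fun C hC => ?_
  obtain ⟨g₀, hg₀, rfl⟩ := Finset.mem_image.mp hC
  have hfiber : {g ∈ α.coeff.support | P.classOf g = P.classOf g₀} = P.classOf g₀ := by
    ext g
    rw [Finset.mem_filter, classOf_eq_classOf_iff, Finsupp.mem_support_iff]
    refine ⟨And.right, fun hg => ⟨?_, hg⟩⟩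
    rw [hα _ (P.classOf_mem g₀) g hg g₀ (P.mem_classOf g₀)]
    exact Finsupp.mem_support_iff.mp hg₀
  have hconst : ∑ g ∈ P.classOf g₀, MonoidAlgebra.single g (α.coeff g)
      = α.coeff g₀ • simpleQuantity F (P.classOf g₀) := by
    rw [simpleQuantity, Finset.smul_sum]
    refine Finset.sum_congr rfl fun g hg => ?_
    rw [hα _ (P.classOf_mem g₀) g hg g₀ (P.mem_classOf g₀), ← MonoidAlgebra.ofCoeff_smul,
      Finsupp.smul_single_one, MonoidAlgebra.ofCoeff_single]
  rw [hfiber, hconst]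
  exact Submodule.smul_mem _ _ (Submodule.subset_span ⟨_, P.classOf_mem g₀, rfl⟩)

theorem mem_schurModule_iff {α : MonoidAlgebra F G} :
    α ∈ schurModule F P ↔ P.IsConstOnClasses α.coeff :=
  ⟨isConstOnClasses_coeff_of_mem_schurModule, mem_schurModule_of_isConstOnClasses⟩

end SchurModule

theorem stmt4_general {F G : Type*} [Field F]
    (P : FinPartition G) (f : F → F) (hf : f 0 = 0)
    (α : MonoidAlgebra F G) (hα : α ∈ schurModule F P) :
    MonoidAlgebra.ofCoeff (Finsupp.mapRange f hf α.coeff) ∈ schurModule F P :=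
  -- the coefficient function of the left-hand side is `f ∘ α.coeff` by definition
  mem_schurModule_iff.mpr ((mem_schurModule_iff.mp hα).comp f)

theorem stmt4 {F G : Type*} [Field F] [CharZero F] [Group G]
    (P : FinPartition G) (f : F → F) (hf : f 0 = 0)
    (α : MonoidAlgebra F G) (hα : α ∈ schurModule F P) :
    MonoidAlgebra.ofCoeff (Finsupp.mapRange f hf α.coeff) ∈ schurModule F P :=
  stmt4_general P f hf α hα
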